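/- Let A generate an α-times resolvent family {S_α(t)}_{t≥0} on X, where 1 < α < 2, and let r > 0. Suppose that for every continuous f : [0,r] → X the element (P_α*f)(r) = ∫_0^r P_α(r−s)f(s) ds belongs to D(A). Then the linear operator f ↦ A((P_α*f)(r)) from C([0,r];X) (with the supremum norm) to X is bounded: there exists C > 0 such that ‖A((P_α*f)(r))‖ ≤ C sup_{t∈[0,r]} ‖f(t)‖ for all continuous f : [0,r] → X. -/

import Mathlib

open MeasureTheory Set

/-- `g β t = t^(β-1)/Γ(β)`. -/
noncomputable def g (β t : ℝ) : ℝ := t ^ (β - 1) / Real.Gamma β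

/-- `Pa α S t x = (g_{α-1} * S)(t) x = ∫_0^t g_{α-1}(t-s) S(s) x ds`. -/
noncomputable def Pa {X : Type*} [NormedAddCommGroup X] [NormedSpace ℂ X]
    (α : ℝ) (S : ℝ → X →L[ℂ] X) (t : ℝ) (x : X) : X :=
  ∫ s in (0:ℝ)..t, g (α - 1) (t - s) • S s x

/-! The map `f ↦ (P_α * f)(r)` is a bounded linear operator `C([0, r]; X) → X` with range in
`D(A)`, so `f ↦ A (P_α * f)(r)` is an everywhere defined linear map whose graph is closed because
`A` is closed; the closed graph theorem makes it bounded. Boundedness of `P_α * ·` needs only that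
`S_α` is uniformly bounded on `[0, r]` (Banach–Steinhaus) and that the kernel `g_{α-1}` is
integrable (`α > 1`); the integrand `s ↦ P_α(r - s) f(s)` is continuous because a bounded strongly
continuous family of operators is jointly continuous. -/

open Filter Topology

section Kernel

variable {β : ℝ}

theorem g_nonneg (hβ : 0 < β) {t : ℝ} (ht : 0 ≤ t) : 0 ≤ g β t :=
  div_nonneg (Real.rpow_nonneg ht _) (Real.Gamma_pos_of_pos hβ).le

theorem intervalIntegrable_g (hβ : 0 < β) (a b : ℝ) : IntervalIntegrable (g β) volume a b :=
  (intervalIntegral.intervalIntegrable_rpow' (by linarith)).div_const _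

theorem intervalIntegrable_g_sub (hβ : 0 < β) (t : ℝ) :
    IntervalIntegrable (fun s => g β (t - s)) volume 0 t := by
  simpa using ((intervalIntegrable_g hβ t 0).comp_sub_left t)

theorem g_mul (t u : ℝ) (ht : 0 ≤ t) (hu : 0 ≤ u) : g β (t * u) = t ^ (β - 1) * g β u := by
  rw [g, g, Real.mul_rpow ht hu, mul_div_assoc]

variable {E : Type*} [NormedAddCommGroup E] [NormedSpace ℝ E]

/-- The substitution `s = t v` moves the singularity of the kernel to the fixed endpoint `1`, so
that continuity in `t` follows by dominated convergence on a fixed interval. -/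
theorem integral_g_sub_smul_eq (hβ : 0 < β) {t : ℝ} (ht : 0 ≤ t) (φ : ℝ → E) :
    ∫ s in (0:ℝ)..t, g β (t - s) • φ s = t ^ β • ∫ v in (0:ℝ)..1, g β (1 - v) • φ (t * v) := by
  rcases ht.eq_or_lt with rfl | ht
  · simp [Real.zero_rpow hβ.ne']
  have hpt : ∀ v ∈ uIcc (0:ℝ) 1, g β (t - t * v) • φ (t * v)
      = t ^ (β - 1) • (g β (1 - v) • φ (t * v)) := by
    intro v hv
    rw [uIcc_of_le zero_le_one] at hv
    rw [smul_smul, ← g_mul t (1 - v) ht.le (by linarith [hv.2]), mul_one_sub]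
  calc ∫ s in (0:ℝ)..t, g β (t - s) • φ s
      = t • ∫ v in (0:ℝ)..1, g β (t - t * v) • φ (t * v) := by
        simpa using (intervalIntegral.smul_integral_comp_mul_left
          (fun s => g β (t - s) • φ s) t (a := 0) (b := 1)).symm
    _ = t ^ β • ∫ v in (0:ℝ)..1, g β (1 - v) • φ (t * v) := by
        rw [intervalIntegral.integral_congr hpt, intervalIntegral.integral_smul, smul_smul,
          Real.rpow_sub_one ht.ne', mul_div_cancel₀ _ ht.ne']

end Kernel

section StronglyContinuous

variable {P 𝕜 E F : Type*} [TopologicalSpace P] [NontriviallyNormedField 𝕜]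
  [NormedAddCommGroup E] [NormedSpace 𝕜 E] [NormedAddCommGroup F] [NormedSpace 𝕜 F]
  {T : P → E →L[𝕜] F} {K : Set P}

theorem exists_norm_le_of_continuousOn_apply [CompleteSpace E] (hK : IsCompact K)
    (hT : ∀ x, ContinuousOn (fun a => T a x) K) : ∃ M, ∀ a ∈ K, ‖T a‖ ≤ M := by
  obtain ⟨M, hM⟩ := banach_steinhaus (g := fun a : K => T a) fun x =>
    (hK.exists_bound_of_continuousOn (hT x)).imp fun _ h a => h a a.2
  exact ⟨M, fun a ha => hM ⟨a, ha⟩⟩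

theorem continuousOn_clm_apply_of_norm_le {M : ℝ} (hT : ∀ x, ContinuousOn (fun a => T a x) K)
    (hM : ∀ a ∈ K, ‖T a‖ ≤ M) : ContinuousOn (fun p : P × E => T p.1 p.2) (K ×ˢ univ) := by
  rintro ⟨a₀, x₀⟩ ⟨ha₀, -⟩
  have hsmall : Tendsto (fun p : P × E => T p.1 (p.2 - x₀)) (𝓝[K ×ˢ univ] (a₀, x₀)) (𝓝 0) := by
    refine squeeze_zero_norm' (a := fun p : P × E => M * ‖p.2 - x₀‖) ?_ ?_
    · filter_upwards [self_mem_nhdsWithin] with p hp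
      exact (T p.1).le_of_opNorm_le (hM p.1 hp.1) _
    · have hcont : Continuous fun p : P × E => M * ‖p.2 - x₀‖ := by fun_prop
      simpa using (hcont.continuousWithinAt (s := K ×ˢ univ) (x := (a₀, x₀))).tendsto
  have hfix : ContinuousWithinAt (fun p : P × E => T p.1 x₀) (K ×ˢ univ) (a₀, x₀) :=
    ContinuousWithinAt.comp (g := fun a => T a x₀) (hT x₀ a₀ ha₀) continuousWithinAt_fst
      fun p (hp : p ∈ K ×ˢ univ) => hp.1
  rw [ContinuousWithinAt]
  simpa using hsmall.add hfix

end StronglyContinuous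

theorem continuousOn_intervalIntegral_smul_of_continuousOn_prod {P E : Type*}
    [TopologicalSpace P] [FirstCountableTopology P] [NormedAddCommGroup E] [NormedSpace ℝ E]
    {k : ℝ → ℝ} {a b : ℝ} (hk : IntervalIntegrable k volume a b) {Φ : P → ℝ → E} {K : Set P}
    (hK : IsCompact K) (hΦ : ContinuousOn (Function.uncurry Φ) (K ×ˢ uIcc a b)) :
    ContinuousOn (fun x => ∫ v in a..b, k v • Φ x v) K := by
  obtain ⟨C, hC⟩ := (hK.prod isCompact_uIcc).exists_bound_of_continuousOn hΦ
  have hslice : ∀ x ∈ K, ContinuousOn (Φ x) (uIcc a b) := fun x hx =>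
    hΦ.comp (Continuous.prodMk_right x).continuousOn fun v hv => ⟨hx, hv⟩
  intro x₀ hx₀
  refine intervalIntegral.continuousWithinAt_of_dominated_interval (bound := fun v => |k v| * C)
    (eventually_nhdsWithin_of_forall fun x hx => ?_) (eventually_nhdsWithin_of_forall
      fun x hx => ae_of_all _ fun v hv => ?_) (hk.abs.mul_const C) (ae_of_all _ fun v hv => ?_)
  · exact hk.def'.aestronglyMeasurable.smul
      (((hslice x hx).mono uIoc_subset_uIcc).aestronglyMeasurable measurableSet_uIoc)
  · rw [norm_smul, Real.norm_eq_abs]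
    exact mul_le_mul_of_nonneg_left (hC (x, v) ⟨hx, uIoc_subset_uIcc hv⟩) (abs_nonneg _)
  · have hΦv : ContinuousWithinAt (fun x => Φ x v) K x₀ :=
      ContinuousWithinAt.comp (g := Function.uncurry Φ) (f := fun x => (x, v))
        (hΦ (x₀, v) ⟨hx₀, uIoc_subset_uIcc hv⟩)
        (continuous_id.prodMk continuous_const).continuousWithinAt
        fun x hx => ⟨hx, uIoc_subset_uIcc hv⟩
    exact continuousWithinAt_const.smul hΦv

theorem LinearPMap.exists_bound_comp_of_isClosed_graph {𝕜 E X Y : Type*}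
    [NontriviallyNormedField 𝕜] [NormedAddCommGroup E] [NormedSpace 𝕜 E] [CompleteSpace E]
    [NormedAddCommGroup X] [NormedSpace 𝕜 X] [NormedAddCommGroup Y] [NormedSpace 𝕜 Y]
    [CompleteSpace Y] (A : X →ₗ.[𝕜] Y) (hA : _root_.IsClosed (A.graph : Set (X × Y)))
    (L : E →L[𝕜] X) (hL : ∀ f, L f ∈ A.domain) :
    ∃ C > 0, ∀ f z, (L f, z) ∈ A.graph → ‖z‖ ≤ C * ‖f‖ := by
  set T : E →ₗ[𝕜] Y := A.toFun.comp ((L : E →ₗ[𝕜] X).codRestrict A.domain hL)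
  have hgraph : ∀ f z, (L f, z) ∈ A.graph ↔ z = T f := by
    intro f z
    rw [LinearPMap.mem_graph_iff]
    constructor
    · rintro ⟨y, hy, rfl⟩
      rw [show y = ⟨L f, hL f⟩ from Subtype.ext hy]
      rfl
    · rintro rfl
      exact ⟨⟨L f, hL f⟩, rfl, rfl⟩
  have hT : Continuous T := T.continuous_of_isClosed_graph <| by
    convert hA.preimage ((L.continuous.comp continuous_fst).prodMk continuous_snd) using 1
    ext ⟨f, z⟩
    exact (T.mem_graph_iff _).trans (hgraph f z).symm
  obtain ⟨C, hC0, hC⟩ := SemilinearMapClass.bound_of_continuous T hT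
  exact ⟨C, hC0, fun f z hz => (hgraph f z).1 hz ▸ hC f⟩

section Pa

variable {X : Type*} [NormedAddCommGroup X] [NormedSpace ℂ X] {α r M : ℝ} {S : ℝ → X →L[ℂ] X}

theorem Pa_smul (t : ℝ) (c : ℂ) (x : X) : Pa α S t (c • x) = c • Pa α S t x := by
  simp only [Pa, map_smul, smul_comm _ c, intervalIntegral.integral_smul]

theorem Pa_add (hα : 1 < α) {t : ℝ} (hS : ∀ x, ContinuousOn (fun s => S s x) (uIcc 0 t))
    (x y : X) : Pa α S t (x + y) = Pa α S t x + Pa α S t y := by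
  have hint : ∀ x, IntervalIntegrable (fun s => g (α - 1) (t - s) • S s x) volume 0 t :=
    fun x => (intervalIntegrable_g_sub (by linarith) t).smul_continuousOn (hS x)
  simp only [Pa, map_add, smul_add]
  exact intervalIntegral.integral_add (hint x) (hint y)

theorem norm_Pa_le (hα : 1 < α) {t : ℝ} (ht : 0 ≤ t) (htr : t ≤ r)
    (hM : ∀ s ∈ Icc 0 r, ‖S s‖ ≤ M) (x : X) :
    ‖Pa α S t x‖ ≤ (∫ u in (0:ℝ)..r, g (α - 1) u) * M * ‖x‖ := by
  have hβ : 0 < α - 1 := by linarith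
  have hM0 : 0 ≤ M := (norm_nonneg _).trans (hM 0 ⟨le_rfl, ht.trans htr⟩)
  have hpt : ∀ s ∈ Ioc 0 t, ‖g (α - 1) (t - s) • S s x‖ ≤ g (α - 1) (t - s) * (M * ‖x‖) := by
    intro s hs
    have hg := g_nonneg hβ (sub_nonneg.2 hs.2)
    rw [norm_smul, Real.norm_of_nonneg hg]
    exact mul_le_mul_of_nonneg_left ((S s).le_of_opNorm_le (hM s ⟨hs.1.le, hs.2.trans htr⟩) x) hg
  calc ‖Pa α S t x‖ ≤ ∫ s in (0:ℝ)..t, g (α - 1) (t - s) * (M * ‖x‖) :=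
        intervalIntegral.norm_integral_le_of_norm_le ht (ae_of_all _ hpt)
          ((intervalIntegrable_g_sub hβ t).mul_const _)
    _ = (∫ u in (0:ℝ)..t, g (α - 1) u) * (M * ‖x‖) := by
        rw [intervalIntegral.integral_mul_const, intervalIntegral.integral_comp_sub_left]
        simp
    _ ≤ (∫ u in (0:ℝ)..r, g (α - 1) u) * (M * ‖x‖) := by
        gcongr
        exact intervalIntegral.integral_mono_interval le_rfl ht htr
          ((ae_restrict_iff' measurableSet_Ioc).2 (ae_of_all _ fun u hu => g_nonneg hβ hu.1.le))
          (intervalIntegrable_g hβ 0 r)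
    _ = (∫ u in (0:ℝ)..r, g (α - 1) u) * M * ‖x‖ := (mul_assoc _ _ _).symm

theorem continuousOn_Pa_sub_apply (hα : 1 < α) (hS : ∀ x, ContinuousOn (fun s => S s x) (Icc 0 r))
    (hM : ∀ s ∈ Icc 0 r, ‖S s‖ ≤ M) {F : ℝ → X} (hF : ContinuousOn F (Icc 0 r)) :
    ContinuousOn (fun s => Pa α S (r - s) (F s)) (Icc 0 r) := by
  have hβ : 0 < α - 1 := by linarith
  have hmaps : MapsTo (fun q : ℝ × ℝ => ((r - q.1) * q.2, F q.1)) (Icc 0 r ×ˢ uIcc 0 1)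
      (Icc 0 r ×ˢ univ) := by
    rintro ⟨s, v⟩ ⟨hs, hv⟩
    rw [uIcc_of_le zero_le_one] at hv
    refine ⟨⟨mul_nonneg (by linarith [hs.2]) hv.1, ?_⟩, trivial⟩
    nlinarith [hs.1, hs.2, hv.1, hv.2]
  have hΦ : ContinuousOn (fun q : ℝ × ℝ => S ((r - q.1) * q.2) (F q.1)) (Icc 0 r ×ˢ uIcc 0 1) :=
    (continuousOn_clm_apply_of_norm_le hS hM).comp
      (((continuous_const.sub continuous_fst).mul continuous_snd).continuousOn.prodMk
        (hF.comp continuousOn_fst fun q hq => hq.1)) hmaps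
  have hk : IntervalIntegrable (fun v => g (α - 1) (1 - v)) volume 0 1 := by
    simpa using (intervalIntegrable_g hβ 1 0).comp_sub_left 1
  refine ContinuousOn.congr (f := fun s => (r - s) ^ (α - 1) •
      ∫ v in (0:ℝ)..1, g (α - 1) (1 - v) • S ((r - s) * v) (F s)) ?_
    fun s hs => integral_g_sub_smul_eq hβ (sub_nonneg.2 hs.2) _
  exact ((continuous_const.sub continuous_id).rpow_const fun _ => Or.inr hβ.le).continuousOn.smul
    (continuousOn_intervalIntegral_smul_of_continuousOn_prod hk isCompact_Icc hΦ)

theorem exists_clm_apply_eq_integral_Pa (hα : 1 < α) (hr : 0 ≤ r)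
    (hS : ∀ x, ContinuousOn (fun s => S s x) (Icc 0 r)) (hM : ∀ s ∈ Icc 0 r, ‖S s‖ ≤ M) :
    ∃ L : C(Icc (0:ℝ) r, X) →L[ℂ] X, ∀ f,
      L f = ∫ s in (0:ℝ)..r, Pa α S (r - s) (f (projIcc 0 r hr s)) := by
  set I := ∫ u in (0:ℝ)..r, g (α - 1) u
  have hI : 0 ≤ I * M :=
    mul_nonneg (intervalIntegral.integral_nonneg hr fun u hu => g_nonneg (by linarith) hu.1)
      ((norm_nonneg _).trans (hM 0 ⟨le_rfl, hr⟩))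
  have hint : ∀ f : C(Icc (0:ℝ) r, X),
      IntervalIntegrable (fun s => Pa α S (r - s) (f (projIcc 0 r hr s))) volume 0 r :=
    fun f => (continuousOn_Pa_sub_apply hα hS hM
      (f.continuous.comp continuous_projIcc).continuousOn).intervalIntegrable_of_Icc hr
  have hslice : ∀ s ∈ uIcc 0 r, ∀ x, ContinuousOn (fun u => S u x) (uIcc 0 (r - s)) := by
    intro s hs x
    rw [uIcc_of_le hr] at hs
    rw [uIcc_of_le (sub_nonneg.2 hs.2)]
    exact (hS x).mono (Icc_subset_Icc_right (by linarith [hs.1]))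
  refine ⟨LinearMap.mkContinuous
    { toFun := fun f => ∫ s in (0:ℝ)..r, Pa α S (r - s) (f (projIcc 0 r hr s))
      map_add' := fun f₁ f₂ => by
        rw [← intervalIntegral.integral_add (hint f₁) (hint f₂)]
        exact intervalIntegral.integral_congr fun s hs => Pa_add hα (hslice s hs) _ _
      map_smul' := fun c f => by
        simp only [ContinuousMap.smul_apply, Pa_smul, intervalIntegral.integral_smul,
          RingHom.id_apply] }
    (I * M * r) fun f => ?_, fun f => rfl⟩
  calc ‖∫ s in (0:ℝ)..r, Pa α S (r - s) (f (projIcc 0 r hr s))‖ ≤ I * M * ‖f‖ * |r - 0| := by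
        refine intervalIntegral.norm_integral_le_of_norm_le_const fun s hs => ?_
        rw [uIoc_of_le hr] at hs
        refine (norm_Pa_le hα (sub_nonneg.2 hs.2) (by linarith [hs.1]) hM _).trans ?_
        gcongr
        exact f.norm_coe_le_norm _
    _ = I * M * r * ‖f‖ := by rw [sub_zero, abs_of_nonneg hr]; ring

end Pa

theorem stmt_17_general
    {X : Type*} [NormedAddCommGroup X] [NormedSpace ℂ X] [CompleteSpace X]
    (α : ℝ) (hα1 : 1 < α)
    (A : X →ₗ.[ℂ] X) (hA_closed : IsClosed (A.graph : Set (X × X)))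
    (S : ℝ → X →L[ℂ] X)
    (hS_cont : ∀ x : X, ContinuousOn (fun t => S t x) (Ici (0:ℝ)))
    (r : ℝ) (hr : 0 < r)
    (hdom : ∀ f : ℝ → X, ContinuousOn f (Icc 0 r) →
      (∫ s in (0:ℝ)..r, Pa α S (r - s) (f s)) ∈ A.domain) :
    ∃ C > 0, ∀ (f : ℝ → X), ContinuousOn f (Icc 0 r) → ∀ z : X,
      ((∫ s in (0:ℝ)..r, Pa α S (r - s) (f s)), z) ∈ A.graph →
      ∀ B : ℝ, (∀ t ∈ Icc (0:ℝ) r, ‖f t‖ ≤ B) → ‖z‖ ≤ C * B := by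
  have hS : ∀ x, ContinuousOn (fun t => S t x) (Icc 0 r) :=
    fun x => (hS_cont x).mono Icc_subset_Ici_self
  obtain ⟨M, hM⟩ := exists_norm_le_of_continuousOn_apply isCompact_Icc hS
  obtain ⟨L, hL⟩ := exists_clm_apply_eq_integral_Pa hα1 hr.le hS hM
  obtain ⟨C, hC0, hC⟩ := A.exists_bound_comp_of_isClosed_graph hA_closed L fun f =>
    hL f ▸ hdom _ (f.continuous.comp continuous_projIcc).continuousOn
  refine ⟨C, hC0, fun f hf z hz B hB => ?_⟩
  let fc : C(Icc (0:ℝ) r, X) := ⟨(Icc 0 r).domRestrict f, hf.domRestrict⟩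
  have hLfc : L fc = ∫ s in (0:ℝ)..r, Pa α S (r - s) (f s) := by
    rw [hL]
    refine intervalIntegral.integral_congr fun s hs => ?_
    rw [uIcc_of_le hr.le] at hs
    rw [projIcc_of_mem hr.le hs]
    rfl
  have hfc : ‖fc‖ ≤ B :=
    (ContinuousMap.norm_le _ ((norm_nonneg _).trans (hB 0 ⟨le_rfl, hr.le⟩))).2 fun t => hB t t.2
  calc ‖z‖ ≤ C * ‖fc‖ := hC fc z (hLfc ▸ hz)
    _ ≤ C * B := by gcongr

theorem stmt_17
    {X : Type*} [NormedAddCommGroup X] [NormedSpace ℂ X] [CompleteSpace X]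
    (α : ℝ) (hα1 : 1 < α) (hα2 : α < 2)
    (A : X →ₗ.[ℂ] X) (hA_closed : IsClosed (A.graph : Set (X × X)))
    (hA_dense : Dense (A.domain : Set X))
    (S : ℝ → X →L[ℂ] X)
    (hS_cont : ∀ x : X, ContinuousOn (fun t => S t x) (Ici (0:ℝ)))
    (hS_zero : S 0 = 1)
    (hS_dom : ∀ t : ℝ, 0 ≤ t → ∀ x ∈ A.domain, S t x ∈ A.domain)
    (hS_comm : ∀ t : ℝ, 0 ≤ t → ∀ x y : X, (x, y) ∈ A.graph → (S t x, S t y) ∈ A.graph)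
    (hS_eq : ∀ t : ℝ, 0 ≤ t → ∀ x y : X, (x, y) ∈ A.graph →
      S t x = x + ∫ s in (0:ℝ)..t, g α (t - s) • S s y)
    (r : ℝ) (hr : 0 < r)
    (hdom : ∀ f : ℝ → X, ContinuousOn f (Icc 0 r) →
      (∫ s in (0:ℝ)..r, Pa α S (r - s) (f s)) ∈ A.domain) :
    ∃ C > 0, ∀ (f : ℝ → X), ContinuousOn f (Icc 0 r) → ∀ z : X,
      ((∫ s in (0:ℝ)..r, Pa α S (r - s) (f s)), z) ∈ A.graph →
      ∀ B : ℝ, (∀ t ∈ Icc (0:ℝ) r, ‖f t‖ ≤ B) → ‖z‖ ≤ C * B :=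
  stmt_17_general α hα1 A hA_closed S hS_cont r hr hdom
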